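/- arXiv:1212.5022 — 5 statements merged into one kernel-verified Lean document; each statement's English description precedes it below -/
import Mathlib

section
/- Let l, m, n be nonnegative integers with gcd(l,m) = gcd(l,n) = 1. Then the circle action on 𝕊³_ℍ × 𝕊³ defined by x·(p,(z,w)) = (p x^l, (x^m z, x^n w)) is free: if x ∈ 𝕊¹ satisfies p x^l = p, x^m z = z and x^n w = w for some p ∈ 𝕊³_ℍ and some (z,w) ∈ ℂ² with |z|² + |w|² = 1, then x = 1. -/
/-!
Since `p ≠ 0` and one of `z`, `w` is nonzero, cancelling gives `x ^ l = 1` together with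
`x ^ m = 1` or `x ^ n = 1`, so the order of `x` divides a gcd equal to `1`.
-/

noncomputable section

open Quaternion

/-- The embedding of `ℂ` into the quaternions, sending `a + b·i` to the quaternion `a + b·i`. -/
def cq (x : ℂ) : Quaternion ℝ := ⟨x.re, x.im, 0, 0⟩

theorem cq_eq_one_iff {z : ℂ} : cq z = 1 ↔ z = 1 := by
  refine ⟨fun h => Complex.ext (congrArg QuaternionAlgebra.re h) (congrArg QuaternionAlgebra.imI h),
    ?_⟩
  rintro rfl
  ext <;> simp [cq]

theorem eq_one_of_pow_eq_one_of_gcd_eq_one {M : Type*} [Monoid M] {a : M} {k l : ℕ}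
    (hkl : Nat.gcd k l = 1) (hk : a ^ k = 1) (hl : a ^ l = 1) : a = 1 := by
  simpa [hkl] using pow_gcd_eq_one.mpr ⟨hk, hl⟩

/-- **Freeness of the circle action.**
Let `l, m, n` be nonnegative integers with `gcd(l,m) = gcd(l,n) = 1`.  If `x ∈ 𝕊¹` satisfies
`p x^l = p`, `x^m z = z` and `x^n w = w` for some unit quaternion `p` and some `(z,w) ∈ ℂ²`
with `|z|² + |w|² = 1`, then `x = 1`; that is, the circle action
`x·(p,(z,w)) = (p x^l, (x^m z, x^n w))` on `𝕊³_ℍ × 𝕊³` is free. -/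
theorem circle_action_free (l m n : ℕ) (hlm : Nat.gcd l m = 1) (hln : Nat.gcd l n = 1)
    (x : Circle) (p : Quaternion ℝ) (hp : ‖p‖ = 1)
    (z w : ℂ) (hzw : Complex.normSq z + Complex.normSq w = 1)
    (h1 : p * cq ((x : ℂ) ^ l) = p) (h2 : (x : ℂ) ^ m * z = z) (h3 : (x : ℂ) ^ n * w = w) :
    x = 1 := by
  have hp0 : p ≠ 0 := norm_ne_zero_iff.mp (hp ▸ one_ne_zero)
  have hxl : (x : ℂ) ^ l = 1 := cq_eq_one_iff.mp ((mul_eq_left₀ hp0).mp h1)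
  rw [← Circle.coe_eq_one]
  rcases eq_or_ne z 0 with rfl | hz
  · have hw : w ≠ 0 := by
      rintro rfl
      simp at hzw
    exact eq_one_of_pow_eq_one_of_gcd_eq_one hln hxl ((mul_eq_right₀ hw).mp h3)
  · exact eq_one_of_pow_eq_one_of_gcd_eq_one hlm hxl ((mul_eq_right₀ hz).mp h2)
end
end

section
/- Let d, q₁, q₂ be positive integers, set n₁ = d·q₁ and n₂ = d·q₂, let b₁, b₂ be integers with 0 ≤ b_j < q_j and gcd(b_j, q_j) = 1 for j = 1, 2, and let k ∈ ℤ. Set l = b₁q₂ + b₂q₁ + k·q₁q₂. Then the group presented by two generators e₁, e₂ subject to the relations e₁^{n₁} = 1, e₂^{n₂} = 1, e₁^{q₁} = e₂^{q₂}, and e₁^{b₁} = e₂^{-(b₂ + k·q₂)} is a cyclic group of order gcd(n₁, n₂, l) (where gcd denotes the nonnegative greatest common divisor of integers); that is, this presented group is isomorphic to ℤ/gcd(n₁, n₂, l)ℤ. -/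
/-!
Write `e₁ = of true`, `e₂ = of false` and `c = b₂ + k q₂`, so that `l = b₁ q₂ + c q₁` and the
last relation reads `e₁^{b₁} = e₂^{-c}`. As `b₁` is coprime to `q₁`, the relations
`e₁^{q₁} = e₂^{q₂}` and `e₁^{b₁} = e₂^{-c}` make `e₁` a power of `e₂`, so `e₂` generates the group;
symmetrically (`c` is coprime to `q₂`) `e₂` is a power of `e₁`, whence `e₂^{n₁} = 1`, and
`e₂^{b₁ q₂} = e₁^{b₁ q₁} = e₂^{-c q₁}` gives `e₂^l = 1`. So the order of `e₂` divides
`m = gcd(n₁, n₂, l)`. Conversely, for `a` with `a q₁ ≡ q₂` and `a b₁ ≡ -c (mod l)`, the assignment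
`e₁ ↦ a`, `e₂ ↦ 1` respects all relations in `ℤ/m` (for `e₁^{n₁}` note `a n₁ = d a q₁ ≡ n₂`),
so `e₂` has order exactly `m`.
-/

noncomputable section

/-- The relators `e₁^{n₁}`, `e₂^{n₂}`, `e₁^{q₁}·e₂^{-q₂}` and `e₁^{b₁}·e₂^{b₂+k·q₂}`,
corresponding to the relations `e₁^{n₁} = 1`, `e₂^{n₂} = 1`, `e₁^{q₁} = e₂^{q₂}` and
`e₁^{b₁} = e₂^{-(b₂+k·q₂)}`, where `e₁ = of true` and `e₂ = of false`. -/
def fundGroupRels (n₁ n₂ q₁ q₂ : ℕ) (b₁ b₂ k : ℤ) : Set (FreeGroup Bool) :=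
  {FreeGroup.of true ^ n₁, FreeGroup.of false ^ n₂,
    FreeGroup.of true ^ q₁ * (FreeGroup.of false ^ q₂)⁻¹,
    FreeGroup.of true ^ b₁ * (FreeGroup.of false ^ (-(b₂ + k * q₂)))⁻¹}

open Subgroup PresentedGroup

section Group

variable {G : Type*} [Group G]

theorem mem_zpowers_of_zpow_eq_of_isCoprime {g h : G} {p q b c : ℤ} (hpq : g ^ p = h ^ q)
    (hbc : g ^ b = h ^ c) (hbp : IsCoprime b p) : g ∈ zpowers h := by
  obtain ⟨x, y, hxy⟩ := hbp
  refine ⟨c * x + q * y, ?_⟩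
  calc h ^ (c * x + q * y) = (g ^ b) ^ x * (g ^ p) ^ y := by
        rw [hbc, hpq, ← zpow_mul, ← zpow_mul, zpow_add]
    _ = g := by rw [← zpow_mul, ← zpow_mul, ← zpow_add, mul_comm b, mul_comm p, hxy, zpow_one]

theorem zpow_mul_sub_mul_eq_one {g h : G} {p q b c : ℤ} (hpq : g ^ p = h ^ q)
    (hbc : g ^ b = h ^ c) : h ^ (b * q - c * p) = 1 := by
  rw [zpow_sub, mul_inv_eq_one, zpow_mul', zpow_mul, ← hpq, ← hbc, ← zpow_mul, ← zpow_mul,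
    mul_comm]

theorem ZMod.mem_zpowers_ofAdd_one {m : ℕ} (x : Multiplicative (ZMod m)) :
    x ∈ zpowers (Multiplicative.ofAdd 1) := by
  obtain ⟨z, hz⟩ := ZMod.intCast_surjective x.toAdd
  exact ⟨z, by simp only [← ofAdd_zsmul, zsmul_one, hz]; rfl⟩

theorem nonempty_mulEquiv_zmod_of_forall_mem_zpowers {g : G} (hg : ∀ x, x ∈ zpowers g) {m : ℕ}
    (hgm : g ^ m = 1) (φ : G →* Multiplicative (ZMod m)) (hφ : φ g = .ofAdd 1) :
    Nonempty (G ≃* Multiplicative (ZMod m)) := by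
  have hm : orderOf (Multiplicative.ofAdd (1 : ZMod m)) = m := ZMod.addOrderOf_one m
  have hord : orderOf g = m :=
    (orderOf_dvd_of_pow_eq_one hgm).antisymm (hm ▸ hφ ▸ orderOf_map_dvd φ g)
  exact ⟨mulEquivOfOrderOfEq hg ZMod.mem_zpowers_ofAdd_one (hord.trans hm.symm)⟩

end Group

theorem IsCoprime.exists_dvd_mul_sub_and_dvd_mul_add {b p : ℤ} (h : IsCoprime b p) (q c : ℤ) :
    ∃ a, b * q + c * p ∣ a * p - q ∧ b * q + c * p ∣ a * b + c := by
  obtain ⟨x, y, hxy⟩ := h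
  exact ⟨q * y - c * x, ⟨-x, by linear_combination q * hxy⟩, ⟨y, by linear_combination (-c) * hxy⟩⟩

namespace fundGroupRels

variable {n₁ n₂ q₁ q₂ : ℕ} {b₁ b₂ k : ℤ}

theorem of_true_pow_eq_one :
    (of true : PresentedGroup (fundGroupRels n₁ n₂ q₁ q₂ b₁ b₂ k)) ^ n₁ = 1 := by
  rw [of, ← map_pow]
  exact one_of_mem (by simp [fundGroupRels])

theorem of_false_pow_eq_one :
    (of false : PresentedGroup (fundGroupRels n₁ n₂ q₁ q₂ b₁ b₂ k)) ^ n₂ = 1 := by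
  rw [of, ← map_pow]
  exact one_of_mem (by simp [fundGroupRels])

theorem of_true_zpow_eq_of_false_zpow :
    (of true : PresentedGroup (fundGroupRels n₁ n₂ q₁ q₂ b₁ b₂ k)) ^ (q₁ : ℤ) =
      of false ^ (q₂ : ℤ) := by
  rw [of, of, zpow_natCast, zpow_natCast, ← map_pow, ← map_pow]
  exact mk_eq_mk_of_mul_inv_mem (by simp [fundGroupRels])

theorem of_true_zpow_eq_of_false_zpow_neg :
    (of true : PresentedGroup (fundGroupRels n₁ n₂ q₁ q₂ b₁ b₂ k)) ^ b₁ =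
      of false ^ (-(b₂ + k * q₂)) := by
  rw [of, of, ← map_zpow, ← map_zpow]
  exact mk_eq_mk_of_mul_inv_mem (by simp [fundGroupRels])

theorem of_true_mem_zpowers_of_false (hb₁ : IsCoprime b₁ q₁) :
    (of true : PresentedGroup (fundGroupRels n₁ n₂ q₁ q₂ b₁ b₂ k)) ∈ zpowers (of false) :=
  mem_zpowers_of_zpow_eq_of_isCoprime of_true_zpow_eq_of_false_zpow
    of_true_zpow_eq_of_false_zpow_neg hb₁

theorem of_false_mem_zpowers_of_true (hb₂ : IsCoprime b₂ q₂) :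
    (of false : PresentedGroup (fundGroupRels n₁ n₂ q₁ q₂ b₁ b₂ k)) ∈ zpowers (of true) := by
  refine mem_zpowers_of_zpow_eq_of_isCoprime of_true_zpow_eq_of_false_zpow.symm
    (b := b₂ + k * q₂) (c := -b₁) ?_ (hb₂.add_mul_right_left k)
  rw [zpow_neg, of_true_zpow_eq_of_false_zpow_neg, zpow_neg, inv_inv]

theorem forall_mem_zpowers_of_false (hb₁ : IsCoprime b₁ q₁)
    (x : PresentedGroup (fundGroupRels n₁ n₂ q₁ q₂ b₁ b₂ k)) : x ∈ zpowers (of false) :=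
  generated_by _ _ (Bool.forall_bool.2 ⟨mem_zpowers _, of_true_mem_zpowers_of_false hb₁⟩) x

theorem of_false_pow_gcd_eq_one (hb₂ : IsCoprime b₂ q₂) :
    (of false : PresentedGroup (fundGroupRels n₁ n₂ q₁ q₂ b₁ b₂ k)) ^
      Int.gcd (Int.gcd n₁ n₂ : ℤ) (b₁ * q₂ + b₂ * q₁ + k * (q₁ * q₂)) = 1 := by
  rw [← orderOf_dvd_iff_pow_eq_one]
  refine Int.dvd_gcd (Int.natCast_dvd_natCast.2 <| Int.dvd_gcd ?_ ?_)
    (orderOf_dvd_iff_zpow_eq_one.2 ?_)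
  · exact_mod_cast (orderOf_dvd_of_mem_zpowers (of_false_mem_zpowers_of_true hb₂)).trans
      (orderOf_dvd_of_pow_eq_one of_true_pow_eq_one)
  · exact_mod_cast orderOf_dvd_of_pow_eq_one of_false_pow_eq_one
  · convert zpow_mul_sub_mul_eq_one of_true_zpow_eq_of_false_zpow
      of_true_zpow_eq_of_false_zpow_neg using 2
    ring

theorem exists_monoidHom_zmod_map_of_false {d m : ℕ} (hn₁ : n₁ = d * q₁) (hn₂ : n₂ = d * q₂)
    (hb₁ : IsCoprime b₁ q₁) (hmn₂ : (m : ℤ) ∣ n₂)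
    (hml : (m : ℤ) ∣ b₁ * q₂ + b₂ * q₁ + k * (q₁ * q₂)) :
    ∃ φ : PresentedGroup (fundGroupRels n₁ n₂ q₁ q₂ b₁ b₂ k) →* Multiplicative (ZMod m),
      φ (of false) = .ofAdd 1 := by
  obtain ⟨a, ha₁, ha₂⟩ := hb₁.exists_dvd_mul_sub_and_dvd_mul_add q₂ (b₂ + k * q₂)
  rw [show b₁ * q₂ + b₂ * q₁ + k * (q₁ * q₂) = b₁ * q₂ + (b₂ + k * q₂) * q₁ by ring] at hml
  have hzero (z : ℤ) (hz : (m : ℤ) ∣ z) : (z : ZMod m) = 0 :=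
    (ZMod.intCast_zmod_eq_zero_iff_dvd z m).2 hz
  have hq : (a * q₁ - q₂ : ZMod m) = 0 := by exact_mod_cast hzero _ (hml.trans ha₁)
  have hb : (a * b₁ + (b₂ + k * q₂) : ZMod m) = 0 := by exact_mod_cast hzero _ (hml.trans ha₂)
  have hn : (d * q₂ : ZMod m) = 0 := by exact_mod_cast hn₂ ▸ hzero _ hmn₂
  let f : Bool → Multiplicative (ZMod m) := fun i => .ofAdd (cond i (a : ZMod m) 1)
  have hf : ∀ r ∈ fundGroupRels n₁ n₂ q₁ q₂ b₁ b₂ k, FreeGroup.lift f r = 1 := by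
    simp only [fundGroupRels, Set.mem_insert_iff, Set.mem_singleton_iff]
    rintro r (rfl | rfl | rfl | rfl) <;>
      simp only [f, map_mul, map_inv, map_pow, map_zpow, FreeGroup.lift_apply_of, cond_true,
        cond_false, ← ofAdd_zsmul, ← ofAdd_nsmul, ← ofAdd_neg, ← ofAdd_add, ofAdd_eq_one,
        nsmul_eq_mul, zsmul_eq_mul, hn₁, hn₂] <;> push_cast
    · linear_combination (d : ZMod m) * hq + hn
    · linear_combination hn
    · linear_combination hq
    · linear_combination hb
  exact ⟨toGroup hf, by simp [toGroup.of, f]⟩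

end fundGroupRels

theorem presentedGroup_cyclic_general (d q₁ q₂ : ℕ)
    (n₁ n₂ : ℕ) (hn₁ : n₁ = d * q₁) (hn₂ : n₂ = d * q₂)
    (b₁ b₂ k : ℤ)
    (hb₁ : 0 ≤ b₁ ∧ b₁ < q₁ ∧ Int.gcd b₁ q₁ = 1)
    (hb₂ : 0 ≤ b₂ ∧ b₂ < q₂ ∧ Int.gcd b₂ q₂ = 1)
    (l : ℤ) (hl : l = b₁ * q₂ + b₂ * q₁ + k * (q₁ * q₂)) :
    Nonempty (PresentedGroup (fundGroupRels n₁ n₂ q₁ q₂ b₁ b₂ k) ≃*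
      Multiplicative (ZMod (Int.gcd (Int.gcd (n₁ : ℤ) (n₂ : ℤ) : ℤ) l))) := by
  have hcop₁ : IsCoprime b₁ q₁ := Int.isCoprime_iff_gcd_eq_one.2 hb₁.2.2
  have hcop₂ : IsCoprime b₂ q₂ := Int.isCoprime_iff_gcd_eq_one.2 hb₂.2.2
  subst hl
  obtain ⟨φ, hφ⟩ := fundGroupRels.exists_monoidHom_zmod_map_of_false hn₁ hn₂ hcop₁
    ((Int.gcd_dvd_left _ _).trans (Int.gcd_dvd_right _ _)) (Int.gcd_dvd_right _ _)
  exact nonempty_mulEquiv_zmod_of_forall_mem_zpowers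
    (fundGroupRels.forall_mem_zpowers_of_false hcop₁) (fundGroupRels.of_false_pow_gcd_eq_one hcop₂)
    φ hφ

/-- **The fundamental group computation.**
Let `d, q₁, q₂` be positive integers, `n₁ = d·q₁`, `n₂ = d·q₂`, let `b₁, b₂` be integers with
`0 ≤ bⱼ < qⱼ` and `gcd(bⱼ, qⱼ) = 1`, let `k ∈ ℤ` and set `l = b₁q₂ + b₂q₁ + k·q₁q₂`.
Then the group presented by generators `e₁, e₂` and relations `e₁^{n₁} = 1`, `e₂^{n₂} = 1`,
`e₁^{q₁} = e₂^{q₂}`, `e₁^{b₁} = e₂^{-(b₂+k·q₂)}` is cyclic of order `gcd(n₁, n₂, l)`, i.e.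
isomorphic to `ℤ/gcd(n₁,n₂,l)ℤ`. -/
theorem presentedGroup_cyclic (d q₁ q₂ : ℕ) (hd : 0 < d) (hq₁ : 0 < q₁) (hq₂ : 0 < q₂)
    (n₁ n₂ : ℕ) (hn₁ : n₁ = d * q₁) (hn₂ : n₂ = d * q₂)
    (b₁ b₂ k : ℤ)
    (hb₁ : 0 ≤ b₁ ∧ b₁ < q₁ ∧ Int.gcd b₁ q₁ = 1)
    (hb₂ : 0 ≤ b₂ ∧ b₂ < q₂ ∧ Int.gcd b₂ q₂ = 1)
    (l : ℤ) (hl : l = b₁ * q₂ + b₂ * q₁ + k * (q₁ * q₂)) :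
    Nonempty (PresentedGroup (fundGroupRels n₁ n₂ q₁ q₂ b₁ b₂ k) ≃*
      Multiplicative (ZMod (Int.gcd (Int.gcd (n₁ : ℤ) (n₂ : ℤ) : ℤ) l))) :=
  presentedGroup_cyclic_general d q₁ q₂ n₁ n₂ hn₁ hn₂ b₁ b₂ k hb₁ hb₂ l hl
end
end

section
/- Let l, n₁, n₂ be positive integers with gcd(l, n₁) = gcd(l, n₂) = 1, and let d ≥ 3 be an integer dividing both n₁ and n₂. Let ζ = cos(2π/d) + i·sin(2π/d), a unit quaternion. Then the set of points of 𝔑^l_{n₁,n₂} fixed by ζ under the left action of the unit quaternions (i.e., {X ∈ 𝔑^l_{n₁,n₂} : ζ·X = X}) equals the image under the quotient map of the set (𝕊¹ ∪ 𝕊¹·j) × 𝕊³ ⊂ 𝕊³_ℍ × 𝕊³. -/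
noncomputable section

open Quaternion

/-- The total space `𝕊³_ℍ × 𝕊³`: pairs of a unit quaternion and a point `(z,w) ∈ ℂ²`
with `|z|² + |w|² = 1`. -/
abbrev TotalSpace : Type :=
  {a : Quaternion ℝ × (ℂ × ℂ) // ‖a.1‖ = 1 ∧ Complex.normSq a.2.1 + Complex.normSq a.2.2 = 1}

/-- The circle action `x · (p,(z,w)) = (p x^l, (x^m z, x^n w))` on the ambient space. -/
def circleAct (l m n : ℕ) (x : Circle) (a : Quaternion ℝ × (ℂ × ℂ)) :
    Quaternion ℝ × (ℂ × ℂ) :=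
  (a.1 * cq ((x : ℂ) ^ l), ((x : ℂ) ^ m * a.2.1, (x : ℂ) ^ n * a.2.2))

/-- The orbit relation of the circle action on `𝕊³_ℍ × 𝕊³`. -/
def NRel (l m n : ℕ) (a b : TotalSpace) : Prop :=
  ∃ x : Circle, circleAct l m n x a.1 = b.1

/-- The orbit space `𝔑^l_{m,n}`, with the quotient topology. -/
abbrev NSpace (l m n : ℕ) : Type := Quot (NRel l m n)


/-- The left action of the group of unit quaternions on `𝔑^l_{m,n}`,
`g·[(p,(z,w))] = [(gp,(z,w))]`. -/
def quatAct (l m n : ℕ) (g : Metric.sphere (0 : Quaternion ℝ) 1) :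
    NSpace l m n → NSpace l m n :=
  Quot.lift
    (fun a => Quot.mk _ ⟨((g : Quaternion ℝ) * a.1.1, a.1.2), by
      refine ⟨?_, a.2.2⟩
      have hg : ‖(g : Quaternion ℝ)‖ = 1 := mem_sphere_zero_iff_norm.mp g.2
      rw [norm_mul, hg, a.2.1, mul_one]⟩)
    (by
      rintro ⟨⟨p, z, w⟩, hp, hzw⟩ ⟨⟨p', z', w'⟩, hp', hzw'⟩ ⟨x, hx⟩
      apply Quot.sound
      refine ⟨x, ?_⟩
      simp only [circleAct, Prod.mk.injEq] at hx ⊢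
      exact ⟨by rw [mul_assoc, hx.1], hx.2⟩)


/-- The quaternion unit `j`. -/
def jq : Quaternion ℝ := ⟨0, 0, 1, 0⟩


/-! Write a quaternion as `p = α + β j` with `α, β ∈ ℂ`. Since `j z = z̄ j`, the map `p ↦ ξ p y`
acts by `α ↦ ξ α y` and `β ↦ ξ β ȳ`. If `ξ` is not real, `ξ y = 1 = ξ ȳ` is impossible, so `α = 0`
or `β = 0`: a unit quaternion fixed by such a map lies in `𝕊¹ ∪ 𝕊¹ j`. Conversely `ξ ∈ 𝕊¹` fixes
`u ∈ 𝕊¹` under `p ↦ ξ p ξ⁻¹` and `u j` under `p ↦ ξ p ξ`. For `ξ = ζ = e^{2πi/d}` both maps are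
realised by the circle action: `x^l = ζ` is solvable in `⟨ζ⟩` since `gcd(l, d) = 1`, and then
`x^{n₁} = x^{n₂} = 1`. -/

open ComplexConjugate

lemma cq_eq_ofComplex (x : ℂ) : cq x = Quaternion.ofComplex x := rfl

lemma cq_mul (x y : ℂ) : cq (x * y) = cq x * cq y := map_mul Quaternion.ofComplex x y

lemma cq_zero : cq 0 = 0 := map_zero Quaternion.ofComplex

lemma norm_cq (x : ℂ) : ‖cq x‖ = ‖x‖ := by
  refine (mul_self_inj (norm_nonneg _) (norm_nonneg _)).mp ?_
  rw [← Quaternion.normSq_eq_norm_mul_self, ← sq, ← Complex.normSq_eq_norm_sq,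
    Quaternion.normSq_def', Complex.normSq_apply]
  simp only [cq]
  ring

lemma norm_jq : ‖jq‖ = 1 := by
  refine (mul_self_inj (norm_nonneg _) zero_le_one).mp ?_
  rw [← Quaternion.normSq_eq_norm_mul_self, Quaternion.normSq_def']
  simp [jq]

lemma jq_mul_cq (x : ℂ) : jq * cq x = cq (conj x) * jq := by
  ext <;> simp only [Quaternion.re_mul, Quaternion.imI_mul, Quaternion.imJ_mul,
    Quaternion.imK_mul] <;> simp [cq, jq]

lemma cq_add_cq_mul_jq (p : ℍ[ℝ]) : cq ⟨p.re, p.imI⟩ + cq ⟨p.imJ, p.imK⟩ * jq = p := by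
  ext <;> simp only [Quaternion.re_add, Quaternion.imI_add, Quaternion.imJ_add, Quaternion.imK_add,
    Quaternion.re_mul, Quaternion.imI_mul, Quaternion.imJ_mul, Quaternion.imK_mul] <;> simp [cq, jq]

lemma cq_add_cq_mul_jq_inj {α β α' β' : ℂ} :
    cq α + cq β * jq = cq α' + cq β' * jq ↔ α = α' ∧ β = β' := by
  simp only [Quaternion.ext_iff, Complex.ext_iff, Quaternion.re_add, Quaternion.imI_add,
    Quaternion.imJ_add, Quaternion.imK_add, Quaternion.re_mul, Quaternion.imI_mul,
    Quaternion.imJ_mul, Quaternion.imK_mul]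
  simp [cq, jq, and_assoc]

lemma cq_mul_cq_add_cq_mul_jq_mul_cq (ξ α β y : ℂ) :
    cq ξ * (cq α + cq β * jq) * cq y = cq (ξ * α * y) + cq (ξ * β * conj y) * jq := by
  simp only [mul_add, add_mul, cq_mul, mul_assoc, jq_mul_cq]

lemma eq_zero_or_eq_zero_of_mul_mul_eq {ξ y α β : ℂ} (hξ : conj ξ ≠ ξ)
    (hα : ξ * α * y = α) (hβ : ξ * β * conj y = β) : α = 0 ∨ β = 0 := by
  by_contra! h
  have hξy : ξ * y = 1 := mul_right_cancel₀ h.1 (by linear_combination hα)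
  have hξy' : ξ * conj y = 1 := mul_right_cancel₀ h.2 (by linear_combination hβ)
  have hy : conj y ≠ 0 := right_ne_zero_of_mul_eq_one hξy'
  refine hξ (mul_right_cancel₀ hy ?_)
  rw [← map_mul, hξy, map_one, hξy']

lemma exists_eq_cq_or_eq_cq_mul_jq {ξ y : ℂ} (hξ : conj ξ ≠ ξ) {p : ℍ[ℝ]}
    (h : cq ξ * p * cq y = p) : ∃ α : ℂ, p = cq α ∨ p = cq α * jq := by
  rw [← cq_add_cq_mul_jq p, cq_mul_cq_add_cq_mul_jq_mul_cq, cq_add_cq_mul_jq_inj] at h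
  rw [← cq_add_cq_mul_jq p]
  rcases eq_zero_or_eq_zero_of_mul_mul_eq hξ h.1 h.2 with h0 | h0
  · exact ⟨⟨p.imJ, p.imK⟩, .inr (by rw [h0, cq_zero, zero_add])⟩
  · exact ⟨⟨p.re, p.imI⟩, .inl (by rw [h0, cq_zero, zero_mul, add_zero])⟩

lemma exists_circle_eq_cq_or_eq_cq_mul_jq {ξ y : ℂ} (hξ : conj ξ ≠ ξ) {p : ℍ[ℝ]}
    (hp : ‖p‖ = 1) (h : cq ξ * p * cq y = p) : ∃ u : Circle, p = cq u ∨ p = cq u * jq := by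
  obtain ⟨α, hα | hα⟩ := exists_eq_cq_or_eq_cq_mul_jq hξ h <;> rw [hα] at hp ⊢
  · exact ⟨⟨α, mem_sphere_zero_iff_norm.mpr (norm_cq α ▸ hp)⟩, .inl rfl⟩
  · rw [norm_mul, norm_jq, mul_one, norm_cq] at hp
    exact ⟨⟨α, mem_sphere_zero_iff_norm.mpr hp⟩, .inr rfl⟩

lemma cq_mul_cq_mul_cq_inv {ξ : ℂ} (hξ : ξ ≠ 0) (u : ℂ) : cq ξ * cq u * cq ξ⁻¹ = cq u := by
  rw [← cq_mul, ← cq_mul, mul_comm ξ, mul_assoc, mul_inv_cancel₀ hξ, mul_one]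

lemma cq_mul_cq_mul_jq_mul_cq (ξ : Circle) (u : ℂ) : cq ξ * (cq u * jq) * cq ξ = cq u * jq := by
  rw [mul_assoc, mul_assoc, jq_mul_cq, ← mul_assoc, ← mul_assoc, ← cq_mul, ← cq_mul,
    ← Circle.coe_inv_eq_conj, mul_comm (ξ : ℂ), mul_assoc, ← Circle.coe_mul, mul_inv_cancel,
    Circle.coe_one, mul_one]

section Orbits

variable {l m n : ℕ}

lemma circleAct_one (a : ℍ[ℝ] × (ℂ × ℂ)) : circleAct l m n 1 a = a := by
  simp [circleAct, cq_eq_ofComplex]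

lemma circleAct_mul (x y : Circle) (a : ℍ[ℝ] × (ℂ × ℂ)) :
    circleAct l m n x (circleAct l m n y a) = circleAct l m n (x * y) a := by
  simp only [circleAct, Circle.coe_mul, mul_pow, mul_assoc, ← cq_mul, mul_comm ((y : ℂ) ^ l)]

lemma circleAct_of_pow_eq_one {x : Circle} (hm : x ^ m = 1) (hn : x ^ n = 1)
    (a : ℍ[ℝ] × (ℂ × ℂ)) : circleAct l m n x a = (a.1 * cq (x ^ l : Circle), a.2) := by
  simp [circleAct, ← Circle.coe_pow, hm, hn]

lemma nRel_equivalence : Equivalence (NRel l m n) where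
  refl a := ⟨1, circleAct_one a.1⟩
  symm := fun ⟨x, hx⟩ => ⟨x⁻¹, by rw [← hx, circleAct_mul, inv_mul_cancel, circleAct_one]⟩
  trans := fun ⟨x, hx⟩ ⟨y, hy⟩ => ⟨y * x, by rw [← circleAct_mul, hx, hy]⟩

lemma quatAct_mk_eq_self_iff (g : Metric.sphere (0 : ℍ[ℝ]) 1) (a : TotalSpace) :
    quatAct l m n g (Quot.mk _ a) = Quot.mk _ a ↔
      ∃ x : Circle, circleAct l m n x ((g : ℍ[ℝ]) * a.1.1, a.1.2) = a.1 :=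
  nRel_equivalence.quot_mk_eq_iff _ _

theorem fixedSet_quatAct_eq_of_pow_eq {ξ : Circle} (hξ : conj (ξ : ℂ) ≠ ξ)
    {g : Metric.sphere (0 : ℍ[ℝ]) 1} (hg : (g : ℍ[ℝ]) = cq ξ)
    {x : Circle} (hxl : x ^ l = ξ) (hxm : x ^ m = 1) (hxn : x ^ n = 1) :
    {X : NSpace l m n | quatAct l m n g X = X} =
      Quot.mk (NRel l m n) ''
        {a : TotalSpace | ∃ u : Circle, a.1.1 = cq u ∨ a.1.1 = cq u * jq} := by
  ext X
  constructor
  · induction X using Quot.ind with | _ a => ?_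
    intro hfix
    obtain ⟨y, hy⟩ := (quatAct_mk_eq_self_iff g a).mp hfix
    rw [hg] at hy
    exact ⟨a, exists_circle_eq_cq_or_eq_cq_mul_jq hξ a.2.1 (congrArg Prod.fst hy), rfl⟩
  · rintro ⟨a, ⟨u, hu | hu⟩, rfl⟩ <;> refine (quatAct_mk_eq_self_iff g a).mpr ?_ <;> rw [hg]
    · refine ⟨x⁻¹, ?_⟩
      rw [circleAct_of_pow_eq_one (by rw [inv_pow, hxm, inv_one]) (by rw [inv_pow, hxn, inv_one]),
        inv_pow, hxl, hu, Circle.coe_inv, cq_mul_cq_mul_cq_inv (Circle.coe_ne_zero ξ), ← hu]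
    · refine ⟨x, ?_⟩
      rw [circleAct_of_pow_eq_one hxm hxn, hxl, hu, cq_mul_cq_mul_jq_mul_cq, ← hu]

end Orbits

lemma exists_pow_pow_eq_self_of_coprime {M : Type*} [Monoid M] {ξ : M} {l d : ℕ}
    (hξ : ξ ^ d = 1) (hl : l.Coprime d) : ∃ k : ℕ, (ξ ^ k) ^ l = ξ := by
  obtain ⟨k, hk⟩ :=
    exists_pow_eq_self_of_coprime (hl.coprime_dvd_right (orderOf_dvd_of_pow_eq_one hξ))
  exact ⟨k, by rwa [pow_right_comm]⟩

namespace Circle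

lemma coe_exp_eq_mk (t : ℝ) : (exp t : ℂ) = ⟨Real.cos t, Real.sin t⟩ :=
  Complex.ext (by simp [Complex.exp_ofReal_mul_I_re]) (by simp [Complex.exp_ofReal_mul_I_im])

lemma exp_two_pi_div_pow_self (d : ℕ) : exp (2 * Real.pi / d) ^ d = 1 := by
  rcases eq_or_ne d 0 with rfl | hd
  · rw [pow_zero]
  · rw [← exp_natCast_mul, mul_div_cancel₀ _ (Nat.cast_ne_zero.mpr hd), exp_two_pi]

lemma conj_exp_two_pi_div_ne {d : ℕ} (hd : 3 ≤ d) :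
    conj (exp (2 * Real.pi / d) : ℂ) ≠ exp (2 * Real.pi / d) := by
  have hd' : (3 : ℝ) ≤ d := by exact_mod_cast hd
  rw [Ne, Complex.conj_eq_iff_im, coe_exp_eq_mk]
  refine (Real.sin_pos_of_pos_of_lt_pi (by positivity) ?_).ne'
  rw [div_lt_iff₀ (by positivity)]
  nlinarith [Real.pi_pos]

end Circle

theorem fixedSet_zeta_eq_general (l n₁ n₂ : ℕ)
    (hln₁ : Nat.gcd l n₁ = 1)
    (d : ℕ) (hd : 3 ≤ d) (hd₁ : d ∣ n₁) (hd₂ : d ∣ n₂)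
    (ζ : Metric.sphere (0 : Quaternion ℝ) 1)
    (hζ : (ζ : Quaternion ℝ) = cq ⟨Real.cos (2 * Real.pi / d), Real.sin (2 * Real.pi / d)⟩) :
    {X : NSpace l n₁ n₂ | quatAct l n₁ n₂ ζ X = X} =
      Quot.mk (NRel l n₁ n₂) ''
        {a : TotalSpace | ∃ x : Circle,
          a.1.1 = cq x ∨ a.1.1 = cq x * jq} := by
  have hξ := Circle.exp_two_pi_div_pow_self d
  obtain ⟨k, hk⟩ := exists_pow_pow_eq_self_of_coprime hξ (Nat.Coprime.coprime_dvd_right hd₁ hln₁)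
  have pow_eq_one {n : ℕ} (hn : d ∣ n) : (Circle.exp (2 * Real.pi / d) ^ k) ^ n = 1 := by
    obtain ⟨c, rfl⟩ := hn
    rw [pow_right_comm, pow_mul, hξ, one_pow, one_pow]
  exact fixedSet_quatAct_eq_of_pow_eq (Circle.conj_exp_two_pi_div_ne hd)
    (hζ.trans (congrArg cq (Circle.coe_exp_eq_mk _).symm)) hk (pow_eq_one hd₁) (pow_eq_one hd₂)

/-- **The fixed point set of `ζ` in `𝔑^l_{n₁,n₂}`.**
Let `l, n₁, n₂` be positive integers with `gcd(l,n₁) = gcd(l,n₂) = 1`, let `d ≥ 3` divide both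
`n₁` and `n₂` and let `ζ = cos(2π/d) + i·sin(2π/d)`, a unit quaternion.  Then the set of points
of `𝔑^l_{n₁,n₂}` fixed by `ζ` under the left action of the unit quaternions equals the image,
under the quotient map, of the subset `(𝕊¹ ∪ 𝕊¹·j) × 𝕊³` of `𝕊³_ℍ × 𝕊³`. -/
theorem fixedSet_zeta_eq (l n₁ n₂ : ℕ) (hl : 0 < l) (hn₁ : 0 < n₁) (hn₂ : 0 < n₂)
    (hln₁ : Nat.gcd l n₁ = 1) (hln₂ : Nat.gcd l n₂ = 1)
    (d : ℕ) (hd : 3 ≤ d) (hd₁ : d ∣ n₁) (hd₂ : d ∣ n₂)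
    (ζ : Metric.sphere (0 : Quaternion ℝ) 1)
    (hζ : (ζ : Quaternion ℝ) = cq ⟨Real.cos (2 * Real.pi / d), Real.sin (2 * Real.pi / d)⟩) :
    {X : NSpace l n₁ n₂ | quatAct l n₁ n₂ ζ X = X} =
      Quot.mk (NRel l n₁ n₂) ''
        {a : TotalSpace | ∃ x : Circle,
          a.1.1 = cq x ∨ a.1.1 = cq x * jq} :=
  fixedSet_zeta_eq_general l n₁ n₂ hln₁ d hd hd₁ hd₂ ζ hζ
end
end

section
/- Let l, n₁, n₂ be positive integers. Consider the circle action on 𝕊¹ × 𝕊³ given by x·(y,(z₁,z₂)) = (y·x^l, (x^{n₁}z₁, x^{n₂}z₂)), where y ∈ 𝕊¹ and (z₁,z₂) ∈ 𝕊³ ⊂ ℂ². Then the orbit space of this action is homeomorphic to the orbit space of 𝕊³ by the action of the group μ_l of l-th roots of unity given by ξ·(z₁,z₂) = (ξ^{n₁}z₁, ξ^{n₂}z₂); in particular, for l ≥ 1 it is homeomorphic to the corresponding lens space 𝕊³/ℤ_l. -/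
/-! Every circle orbit meets the slice `{1} × 𝕊³`, and two points of the slice lie in the same
orbit exactly when they differ by an `l`-th root of unity; so `z ↦ (1, z)` induces a continuous
bijection from the lens space. Its inverse sends `(y, z)` to the class of `x⁻¹ · z` for any
`x` with `x ^ l = y`. It is continuous because the map `(x, w) ↦ (x ^ l, x · w)`, a continuous
surjection of the compact space `𝕊¹ × 𝕊³` onto itself, is a quotient map, and composed with it
the inverse becomes the projection `(x, w) ↦ [w]`. -/

noncomputable section

/-- The unit sphere `𝕊³ ⊂ ℂ²`: pairs `(z₁,z₂)` with `|z₁|² + |z₂|² = 1`. -/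
abbrev SphereC2 : Type :=
  {zw : ℂ × ℂ // Complex.normSq zw.1 + Complex.normSq zw.2 = 1}

/-- The orbit relation of the circle action
`x·(y,(z₁,z₂)) = (y·x^l, (x^{n₁}z₁, x^{n₂}z₂))` on `𝕊¹ × 𝕊³`. -/
def circleRel (l n₁ n₂ : ℕ) (a b : Circle × SphereC2) : Prop :=
  ∃ x : Circle, a.1 * x ^ l = b.1 ∧
    ((x : ℂ) ^ n₁ * a.2.1.1, (x : ℂ) ^ n₂ * a.2.1.2) = b.2.1

/-- The orbit relation of the action of the group `μ_l` of `l`-th roots of unity on `𝕊³`,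
`ξ·(z₁,z₂) = (ξ^{n₁}z₁, ξ^{n₂}z₂)`; its quotient is the lens space `𝕊³/ℤ_l`. -/
def lensRel (l n₁ n₂ : ℕ) (a b : SphereC2) : Prop :=
  ∃ ξ : ℂ, ξ ^ l = 1 ∧ (ξ ^ n₁ * a.1.1, ξ ^ n₂ * a.1.2) = b.1

namespace LensSpace

open Complex Topology

instance : CompactSpace SphereC2 := by
  refine isCompact_iff_compactSpace.mp (Metric.isCompact_of_isClosed_isBounded ?_ ?_)
  · exact isClosed_eq (by fun_prop) continuous_const
  · refine (Metric.isBounded_closedBall (x := (0 : ℂ × ℂ)) (r := 1)).subset fun zw hzw => ?_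
    have h : normSq zw.1 + normSq zw.2 = 1 := hzw
    rw [normSq_eq_norm_sq, normSq_eq_norm_sq] at h
    rw [mem_closedBall_zero_iff, norm_prod_le_iff]
    constructor <;> nlinarith [norm_nonneg zw.1, norm_nonneg zw.2]

def weightedSmul (n₁ n₂ : ℕ) (x : Circle) (z : SphereC2) : SphereC2 :=
  ⟨((x : ℂ) ^ n₁ * z.1.1, (x : ℂ) ^ n₂ * z.1.2), by
    simpa only [map_mul, map_pow, Circle.normSq_coe, one_pow, one_mul] using z.2⟩

variable {l n₁ n₂ : ℕ}

lemma weightedSmul_mul (x x' : Circle) (z : SphereC2) :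
    weightedSmul n₁ n₂ x (weightedSmul n₁ n₂ x' z) = weightedSmul n₁ n₂ (x * x') z := by
  ext <;> simp [weightedSmul, mul_pow, mul_assoc]

@[simp]
lemma weightedSmul_one (z : SphereC2) : weightedSmul n₁ n₂ 1 z = z := by
  simp [weightedSmul]

lemma continuous_weightedSmul :
    Continuous fun q : Circle × SphereC2 => weightedSmul n₁ n₂ q.1 q.2 :=
  Continuous.subtype_mk (by fun_prop) _

lemma circleRel_weightedSmul (p : Circle × SphereC2) (x : Circle) :
    circleRel l n₁ n₂ p (p.1 * x ^ l, weightedSmul n₁ n₂ x p.2) :=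
  ⟨x, rfl, rfl⟩

lemma lensRel_weightedSmul {ξ : Circle} (hξ : ξ ^ l = 1) (z : SphereC2) :
    lensRel l n₁ n₂ z (weightedSmul n₁ n₂ ξ z) :=
  ⟨ξ, by rw [← Circle.coe_pow, hξ, Circle.coe_one], rfl⟩

lemma mk_weightedSmul_eq_of_pow_eq {x x' : Circle} (h : x ^ l = x' ^ l) (z : SphereC2) :
    Quot.mk (lensRel l n₁ n₂) (weightedSmul n₁ n₂ x z) =
      Quot.mk (lensRel l n₁ n₂) (weightedSmul n₁ n₂ x' z) := by
  have hξ : (x' * x⁻¹) ^ l = 1 := by rw [mul_pow, inv_pow, h, mul_inv_cancel]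
  have := lensRel_weightedSmul (n₁ := n₁) (n₂ := n₂) hξ (weightedSmul n₁ n₂ x z)
  rw [weightedSmul_mul, inv_mul_cancel_right] at this
  exact Quot.sound this

def circleRoot (l : ℕ) (y : Circle) : Circle := Circle.exp (arg y / l)

lemma circleRoot_pow (hl : l ≠ 0) (y : Circle) : circleRoot l y ^ l = y := by
  rw [circleRoot, ← Circle.exp_natCast_mul, mul_div_cancel₀ _ (Nat.cast_ne_zero.mpr hl),
    Circle.exp_arg]

def powSmul (l n₁ n₂ : ℕ) (q : Circle × SphereC2) : Circle × SphereC2 :=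
  (q.1 ^ l, weightedSmul n₁ n₂ q.1 q.2)

lemma isQuotientMap_powSmul (hl : l ≠ 0) : IsQuotientMap (powSmul l n₁ n₂) := by
  refine .of_surjective_continuous (fun p => ?_)
    ((continuous_fst.pow l).prodMk continuous_weightedSmul)
  refine ⟨(circleRoot l p.1, weightedSmul n₁ n₂ (circleRoot l p.1)⁻¹ p.2), ?_⟩
  simp [powSmul, circleRoot_pow hl, weightedSmul_mul]

def toLens (l n₁ n₂ : ℕ) (p : Circle × SphereC2) : Quot (lensRel l n₁ n₂) :=
  Quot.mk _ (weightedSmul n₁ n₂ (circleRoot l p.1)⁻¹ p.2)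

lemma toLens_powSmul (hl : l ≠ 0) : toLens l n₁ n₂ ∘ powSmul l n₁ n₂ = Quot.mk _ ∘ Prod.snd := by
  funext q
  have hξ : ((circleRoot l (q.1 ^ l))⁻¹ * q.1) ^ l = 1 := by
    rw [mul_pow, inv_pow, circleRoot_pow hl, inv_mul_cancel]
  simp only [Function.comp_apply, toLens, powSmul, weightedSmul_mul]
  exact (Quot.sound (lensRel_weightedSmul hξ q.2)).symm

lemma continuous_toLens (hl : l ≠ 0) : Continuous (toLens l n₁ n₂) := by
  rw [(isQuotientMap_powSmul hl).continuous_iff, toLens_powSmul hl]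
  exact continuous_quot_mk.comp continuous_snd

lemma toLens_eq_of_circleRel (hl : l ≠ 0) {p q : Circle × SphereC2} (h : circleRel l n₁ n₂ p q) :
    toLens l n₁ n₂ p = toLens l n₁ n₂ q := by
  obtain ⟨x, rfl⟩ : ∃ x, q = (p.1 * x ^ l, weightedSmul n₁ n₂ x p.2) := by
    obtain ⟨x, h₁, h₂⟩ := h
    exact ⟨x, Prod.ext h₁.symm (Subtype.ext h₂.symm)⟩
  rw [toLens, toLens, weightedSmul_mul]
  refine mk_weightedSmul_eq_of_pow_eq ?_ p.2
  rw [mul_pow, inv_pow, inv_pow, circleRoot_pow hl, circleRoot_pow hl, mul_inv,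
    inv_mul_cancel_right]

lemma mk_one_eq_of_lensRel (hl : l ≠ 0) {z z' : SphereC2} (h : lensRel l n₁ n₂ z z') :
    Quot.mk (circleRel l n₁ n₂) (1, z) = Quot.mk (circleRel l n₁ n₂) (1, z') := by
  obtain ⟨ξ, hξ, hz⟩ := h
  let x : Circle := ⟨ξ, mem_sphere_zero_iff_norm.mpr (norm_eq_one_of_pow_eq_one hξ hl)⟩
  refine Quot.sound ⟨x, ?_, hz⟩
  rw [one_mul, ← Circle.coe_inj, Circle.coe_pow, Circle.coe_one]
  exact hξ

def orbitSpaceHomeomorph (hl : l ≠ 0) : Quot (circleRel l n₁ n₂) ≃ₜ Quot (lensRel l n₁ n₂) where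
  toFun := Quot.lift (toLens l n₁ n₂) fun _ _ => toLens_eq_of_circleRel hl
  invFun := Quot.lift (fun z => Quot.mk _ (1, z)) fun _ _ => mk_one_eq_of_lensRel hl
  left_inv := Quot.ind fun p => by
    set x := circleRoot l p.1
    have hp : p = (1 * x ^ l, weightedSmul n₁ n₂ x (weightedSmul n₁ n₂ x⁻¹ p.2)) := by
      simp [x, circleRoot_pow hl, weightedSmul_mul]
    conv_rhs => rw [hp]
    exact Quot.sound (circleRel_weightedSmul _ _)
  right_inv := Quot.ind fun z => by
    have hξ : (circleRoot l 1)⁻¹ ^ l = 1 := by rw [inv_pow, circleRoot_pow hl, inv_one]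
    exact (Quot.sound (lensRel_weightedSmul hξ z)).symm
  continuous_toFun := continuous_quot_lift _ (continuous_toLens hl)
  continuous_invFun := continuous_quot_lift _ (continuous_quot_mk.comp (by fun_prop))

end LensSpace

theorem circle_orbitSpace_homeomorph_lensSpace_general (l n₁ n₂ : ℕ)
    (hl : 0 < l) :
    Nonempty (Quot (circleRel l n₁ n₂) ≃ₜ Quot (lensRel l n₁ n₂)) :=
  ⟨LensSpace.orbitSpaceHomeomorph hl.ne'⟩

/-- **A lens space as an orbit space.**
Let `l, n₁, n₂` be positive integers.  The orbit space of the circle action on `𝕊¹ × 𝕊³`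
given by `x·(y,(z₁,z₂)) = (y·x^l, (x^{n₁}z₁, x^{n₂}z₂))` is homeomorphic to the orbit space
of `𝕊³` under the action of the `l`-th roots of unity `ξ·(z₁,z₂) = (ξ^{n₁}z₁, ξ^{n₂}z₂)`,
i.e. to the lens space `𝕊³/ℤ_l`. -/
theorem circle_orbitSpace_homeomorph_lensSpace (l n₁ n₂ : ℕ)
    (hl : 0 < l) (hn₁ : 0 < n₁) (hn₂ : 0 < n₂) :
    Nonempty (Quot (circleRel l n₁ n₂) ≃ₜ Quot (lensRel l n₁ n₂)) :=
  circle_orbitSpace_homeomorph_lensSpace_general l n₁ n₂ hl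
end
end

section
/- Let l, m, n be nonnegative integers with gcd(l,m) = gcd(l,n) = 1. Then the space 𝔑^l_{m,n} admits a faithful (effective) continuous action of the 3-torus T³ = 𝕊¹ × 𝕊¹ × 𝕊¹. -/
noncomputable section

open Quaternion

/-!
The torus `T⁴` acts effectively on `𝕊³_ℍ × 𝕊³`, by rescaling separately the two complex
coordinates of `p = z₁ + z₂ j` and the two coordinates of `(z, w)`; this commutes with the
circle action, which is the one-parameter subgroup `x ↦ (x^l, x^{-l}, x^m, x^n)` of `T⁴`
(right multiplication by `x^l` sends `z₁ + z₂ j` to `z₁ x^l + (z₂ x^{-l}) j`).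
For Bézout coefficients `C l + A m = 1`, the subtorus `(s, t, u) ↦ (u^A, s, u^{-C}, t)` is a
complement of that circle, since `det [[A, l], [-C, m]] = 1`. Hence it descends to an effective
`T³`-action on the orbit space; effectiveness is seen at a single point all of whose four
complex coordinates are nonzero. The descended action is jointly continuous because the orbit
map of a group action is open, so that its product with the identity is still a quotient map.
-/

open ComplexConjugate

section OrbitSpace

variable {X : Type*} [TopologicalSpace X] {r : X → X → Prop}

theorem isOpenQuotientMap_quot_mk_of_iff_exists {ι : Type*} (hr : Equivalence r)
    (f : ι → X → X) (hf : ∀ i, Continuous (f i)) (hrf : ∀ a b, r a b ↔ ∃ i, f i a = b) :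
    IsOpenQuotientMap (Quot.mk r) := by
  refine ⟨Quot.mk_surjective, continuous_quot_mk, fun U hU => ?_⟩
  rw [← isQuotientMap_quot_mk.isOpen_preimage]
  have hsat : Quot.mk r ⁻¹' (Quot.mk r '' U) = ⋃ i, f i ⁻¹' U := by
    ext a
    simp only [Set.mem_preimage, Set.mem_image, Set.mem_iUnion, hr.quot_mk_eq_iff]
    constructor
    · rintro ⟨b, hb, hba⟩
      obtain ⟨i, rfl⟩ := (hrf a b).mp (hr.symm hba)
      exact ⟨i, hb⟩
    · rintro ⟨i, hi⟩
      exact ⟨f i a, hi, hr.symm ((hrf a _).mpr ⟨i, rfl⟩)⟩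
  rw [hsat]
  exact isOpen_iUnion fun i => (hf i).isOpen_preimage U hU

theorem IsOpenQuotientMap.continuous_quot_map {H : Type*} [TopologicalSpace H]
    (hr : IsOpenQuotientMap (Quot.mk r)) {f : H → X → X}
    (hf : Continuous fun q : H × X => f q.1 q.2) (hfr : ∀ h a b, r a b → r (f h a) (f h b)) :
    Continuous fun q : H × Quot r => Quot.map (f q.1) (hfr q.1) q.2 := by
  rw [← (IsOpenQuotientMap.id.prodMap hr).continuous_comp_iff]
  exact continuous_quot_mk.comp hf

end OrbitSpace

namespace Quaternion

/-- With `complexPart` and `jPart`, a quaternion is written `p = z₁ + z₂ j`. -/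
def complexPart (p : ℍ) : ℂ := ⟨p.re, p.imI⟩

def jPart (p : ℍ) : ℂ := ⟨p.imJ, p.imK⟩

theorem ext_parts {p q : ℍ} (h₁ : p.complexPart = q.complexPart) (h₂ : p.jPart = q.jPart) :
    p = q := by
  simp only [complexPart, jPart, Complex.mk.injEq] at h₁ h₂
  ext <;> tauto

theorem complexPart_mul_coeComplex (p : ℍ) (ξ : ℂ) :
    (p * ξ).complexPart = p.complexPart * ξ := by
  apply Complex.ext <;> simp [complexPart]

theorem jPart_mul_coeComplex (p : ℍ) (ξ : ℂ) : (p * ξ).jPart = p.jPart * conj ξ := by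
  apply Complex.ext <;> simp [jPart]

theorem normSq_eq_normSq_complexPart_add_normSq_jPart (p : ℍ) :
    normSq p = Complex.normSq p.complexPart + Complex.normSq p.jPart := by
  simp [normSq_def', complexPart, jPart, Complex.normSq_apply]
  ring

theorem norm_coeComplex (z : ℂ) : ‖(z : ℍ)‖ = ‖z‖ := by
  rw [norm_eq_sqrt_real_inner, inner_self, Complex.norm_def]
  simp [normSq_def', Complex.normSq_apply, sq]

@[fun_prop]
theorem continuous_complexPart : Continuous complexPart :=
  Complex.equivRealProdCLM.symm.continuous.comp (continuous_re.prodMk continuous_imI)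

@[fun_prop]
theorem continuous_coeComplex : Continuous (coeComplex : ℂ → ℍ) :=
  ofComplex.toLinearMap.continuous_of_finiteDimensional

/-- `scaleParts α σ (z₁ + z₂ j) = α z₁ + (σ z₂) j`. -/
def scaleParts (α σ : ℂ) (p : ℍ) : ℍ :=
  α * p.complexPart + σ * (p - p.complexPart)

@[simp] theorem complexPart_scaleParts (α σ : ℂ) (p : ℍ) :
    (scaleParts α σ p).complexPart = α * p.complexPart := by
  apply Complex.ext <;> simp [scaleParts, complexPart]

@[simp] theorem jPart_scaleParts (α σ : ℂ) (p : ℍ) :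
    (scaleParts α σ p).jPart = σ * p.jPart := by
  apply Complex.ext <;> simp [scaleParts, complexPart, jPart]

theorem scaleParts_one (p : ℍ) : scaleParts 1 1 p = p :=
  ext_parts (by simp) (by simp)

theorem scaleParts_mul (α σ α' σ' : ℂ) (p : ℍ) :
    scaleParts (α * α') (σ * σ') p = scaleParts α σ (scaleParts α' σ' p) :=
  ext_parts (by simp [mul_assoc]) (by simp [mul_assoc])

theorem scaleParts_mul_coeComplex (α σ ξ : ℂ) (p : ℍ) :
    scaleParts α σ (p * ξ) = scaleParts α σ p * ξ :=
  ext_parts (by simp [complexPart_mul_coeComplex, mul_assoc])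
    (by simp [jPart_mul_coeComplex, mul_assoc])

theorem norm_scaleParts {α σ : ℂ} (hα : ‖α‖ = 1) (hσ : ‖σ‖ = 1) (p : ℍ) :
    ‖scaleParts α σ p‖ = ‖p‖ := by
  simp_rw [norm_eq_sqrt_real_inner (F := ℍ), inner_self,
    normSq_eq_normSq_complexPart_add_normSq_jPart]
  simp [Complex.normSq_eq_norm_sq, hα, hσ]

@[fun_prop]
theorem _root_.Continuous.scaleParts {X : Type*} [TopologicalSpace X] {α σ : X → ℂ} {p : X → ℍ}
    (hα : Continuous α) (hσ : Continuous σ) (hp : Continuous p) :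
    Continuous fun x => scaleParts (α x) (σ x) (p x) := by
  unfold Quaternion.scaleParts
  fun_prop

theorem mul_eq_one_of_scaleParts_mul_coeComplex_eq_self {α σ ξ : ℂ} {p : ℍ}
    (h₁ : p.complexPart ≠ 0) (h₂ : p.jPart ≠ 0) (h : scaleParts α σ p * ξ = p) :
    α * ξ = 1 ∧ σ * conj ξ = 1 := by
  have hc := congrArg complexPart h
  have hj := congrArg jPart h
  rw [complexPart_mul_coeComplex, complexPart_scaleParts] at hc
  rw [jPart_mul_coeComplex, jPart_scaleParts] at hj
  exact ⟨(mul_eq_right₀ h₁).mp (by linear_combination hc),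
    (mul_eq_right₀ h₂).mp (by linear_combination hj)⟩

end Quaternion

theorem eq_one_of_zpow_mul_pow_eq_one {G : Type*} [CommGroup G] {l m : ℕ} {A C : ℤ}
    (hCA : C * l + A * m = 1) {u x : G} (h₁ : u ^ A * x ^ l = 1) (h₂ : x ^ m = u ^ C) :
    u = 1 ∧ x = 1 := by
  have huA : u ^ A = (x ^ l)⁻¹ := eq_inv_of_mul_eq_one_left h₁
  have hu : u = 1 :=
    calc u = (u ^ C) ^ (l : ℤ) * (u ^ A) ^ (m : ℤ) := by
          rw [← zpow_mul, ← zpow_mul, ← zpow_add, hCA, zpow_one]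
      _ = 1 := by rw [← h₂, huA]; group
  have hxl : x ^ l = 1 := by simpa [hu] using h₁
  have hxm : x ^ m = 1 := by simpa [hu] using h₂
  refine ⟨hu, ?_⟩
  calc x = (x ^ l) ^ C * (x ^ m) ^ A := by
        rw [← zpow_natCast, ← zpow_natCast, ← zpow_mul, ← zpow_mul, ← zpow_add, mul_comm,
          mul_comm (m : ℤ), hCA, zpow_one]
    _ = 1 := by rw [hxl, hxm, one_zpow, one_zpow, one_mul]

theorem cq_eq_coeComplex (z : ℂ) : cq z = z := rfl

namespace NSpace

variable (l m n : ℕ)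

theorem circleAct_one (a : Quaternion ℝ × (ℂ × ℂ)) : circleAct l m n 1 a = a := by
  simp [circleAct, cq_eq_coeComplex]

theorem circleAct_mul (x y : Circle) (a : Quaternion ℝ × (ℂ × ℂ)) :
    circleAct l m n (x * y) a = circleAct l m n x (circleAct l m n y a) := by
  simp only [circleAct, cq_eq_coeComplex, Circle.coe_mul, mul_pow, Prod.mk.injEq]
  refine ⟨?_, by ring, by ring⟩
  rw [mul_assoc, ← coeComplex_mul, mul_comm ((x : ℂ) ^ l)]

def circleSmul (x : Circle) (a : TotalSpace) : TotalSpace :=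
  ⟨circleAct l m n x a.1, by
    obtain ⟨hp, hzw⟩ := a.2
    simpa [circleAct, cq_eq_coeComplex, norm_coeComplex, Complex.normSq_mul, Circle.norm_coe]
      using ⟨hp, hzw⟩⟩

theorem continuous_circleSmul (x : Circle) : Continuous (circleSmul l m n x) := by
  unfold circleSmul circleAct
  fun_prop

theorem nRel_equivalence : Equivalence (NRel l m n) where
  refl a := ⟨1, circleAct_one l m n a.1⟩
  symm := by
    rintro a b ⟨x, hx⟩
    exact ⟨x⁻¹, by rw [← hx, ← circleAct_mul, inv_mul_cancel, circleAct_one]⟩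
  trans := by
    rintro a b c ⟨x, hx⟩ ⟨y, hy⟩
    exact ⟨y * x, by rw [circleAct_mul, hx, hy]⟩

theorem isOpenQuotientMap_mk : IsOpenQuotientMap (Quot.mk (NRel l m n)) :=
  isOpenQuotientMap_quot_mk_of_iff_exists (nRel_equivalence l m n) (circleSmul l m n)
    (continuous_circleSmul l m n) fun _ _ => by simp [NRel, circleSmul, Subtype.ext_iff]

variable (A C : ℤ)

def torusAct (g : Circle × Circle × Circle) (a : Quaternion ℝ × (ℂ × ℂ)) :
    Quaternion ℝ × (ℂ × ℂ) :=
  (scaleParts (g.2.2 ^ A : Circle) g.1 a.1, ((g.2.2 ^ (-C) : Circle) * a.2.1, g.2.1 * a.2.2))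

theorem torusAct_one (a : Quaternion ℝ × (ℂ × ℂ)) : torusAct A C 1 a = a := by
  simp [torusAct, scaleParts_one]

theorem torusAct_mul (g h : Circle × Circle × Circle) (a : Quaternion ℝ × (ℂ × ℂ)) :
    torusAct A C (g * h) a = torusAct A C g (torusAct A C h a) := by
  simp only [torusAct, Prod.fst_mul, Prod.snd_mul, mul_zpow, Circle.coe_mul, scaleParts_mul,
    mul_assoc]

theorem torusAct_circleAct (g : Circle × Circle × Circle) (x : Circle)
    (a : Quaternion ℝ × (ℂ × ℂ)) :
    torusAct A C g (circleAct l m n x a) = circleAct l m n x (torusAct A C g a) := by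
  simp only [torusAct, circleAct, cq_eq_coeComplex, scaleParts_mul_coeComplex, Prod.mk.injEq]
  exact ⟨trivial, by ring, by ring⟩

def torusSmul (g : Circle × Circle × Circle) (a : TotalSpace) : TotalSpace :=
  ⟨torusAct A C g a.1, by
    obtain ⟨hp, hzw⟩ := a.2
    simpa [torusAct, norm_scaleParts, Complex.normSq_mul, Circle.norm_coe] using ⟨hp, hzw⟩⟩

theorem continuous_torusSmul :
    Continuous fun q : (Circle × Circle × Circle) × TotalSpace => torusSmul A C q.1 q.2 := by
  refine Continuous.subtype_mk ?_ _
  unfold torusAct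
  fun_prop (disch := simp)

theorem nRel_torusSmul (g : Circle × Circle × Circle) (a b : TotalSpace)
    (h : NRel l m n a b) : NRel l m n (torusSmul A C g a) (torusSmul A C g b) := by
  obtain ⟨x, hx⟩ := h
  refine ⟨x, ?_⟩
  change circleAct l m n x (torusAct A C g a.1) = torusAct A C g b.1
  rw [← torusAct_circleAct, hx]

def basePoint : TotalSpace :=
  ⟨(⟨3 / 5, 0, 4 / 5, 0⟩, (3 / 5, 4 / 5)), by
    rw [norm_eq_sqrt_real_inner (F := ℍ), inner_self, normSq_def']
    norm_num [Complex.normSq_apply]⟩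

theorem eq_one_of_nRel_torusSmul_basePoint (hCA : C * l + A * m = 1)
    {g : Circle × Circle × Circle} (h : NRel l m n (torusSmul A C g basePoint) basePoint) :
    g = 1 := by
  obtain ⟨s, t, u⟩ := g
  obtain ⟨x, hx⟩ := h
  change circleAct l m n x (torusAct A C (s, t, u) basePoint.1) = basePoint.1 at hx
  simp only [circleAct, torusAct, basePoint, cq_eq_coeComplex, Prod.ext_iff] at hx
  obtain ⟨hp, hz, hw⟩ := hx
  obtain ⟨h₁, h₂⟩ := mul_eq_one_of_scaleParts_mul_coeComplex_eq_self
    (by norm_num [complexPart, Complex.ext_iff]) (by norm_num [jPart, Complex.ext_iff]) hp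
  rw [← Circle.coe_pow, ← Circle.coe_inv_eq_conj] at h₂
  rw [← mul_assoc] at hz hw
  have hs : s * (x ^ l)⁻¹ = 1 := Circle.coe_eq_one.mp (by exact_mod_cast h₂)
  have ht : x ^ n * t = 1 :=
    Circle.coe_eq_one.mp (by exact_mod_cast (mul_eq_right₀ (by norm_num)).mp hw)
  have hux : x ^ m * u ^ (-C) = 1 :=
    Circle.coe_eq_one.mp (by exact_mod_cast (mul_eq_right₀ (by norm_num)).mp hz)
  rw [zpow_neg, mul_inv_eq_one] at hux
  obtain ⟨rfl, rfl⟩ :=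
    eq_one_of_zpow_mul_pow_eq_one hCA (Circle.coe_eq_one.mp (by exact_mod_cast h₁)) hux
  simp_all

end NSpace

open NSpace in
theorem NSpace_admits_effective_T3_action_general (l m n : ℕ)
    (hlm : Nat.gcd l m = 1) :
    ∃ ρ : (Circle × Circle × Circle) → NSpace l m n → NSpace l m n,
      Continuous (fun q : (Circle × Circle × Circle) × NSpace l m n => ρ q.1 q.2) ∧
      (∀ X, ρ 1 X = X) ∧
      (∀ s t X, ρ (s * t) X = ρ s (ρ t X)) ∧
      (∀ t, (∀ X, ρ t X = X) → t = 1) := by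
  obtain ⟨C, A, hCA⟩ := Nat.isCoprime_iff_coprime.mpr hlm
  refine ⟨fun g => Quot.map (torusSmul A C g) (nRel_torusSmul l m n A C g),
    (isOpenQuotientMap_mk l m n).continuous_quot_map (continuous_torusSmul A C) _, ?_, ?_, ?_⟩
  · rintro ⟨a⟩
    exact congrArg _ (Subtype.ext (torusAct_one A C a.1))
  · rintro g h ⟨a⟩
    exact congrArg _ (Subtype.ext (torusAct_mul A C g h a.1))
  · intro g hg
    exact eq_one_of_nRel_torusSmul_basePoint l m n A C hCA
      (((nRel_equivalence l m n).quot_mk_eq_iff _ _).mp (hg (Quot.mk _ basePoint)))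

/-- **`𝔑^l_{m,n}` admits an effective torus action.**
Let `l, m, n` be nonnegative integers with `gcd(l,m) = gcd(l,n) = 1`.  Then `𝔑^l_{m,n}`
admits a faithful (effective) continuous action of the 3-torus `T³ = 𝕊¹ × 𝕊¹ × 𝕊¹`:
there is a (jointly) continuous action map `ρ` such that `ρ 1 = id`,
`ρ (s·t) = ρ s ∘ ρ t`, and the only element acting as the identity is `1`. -/
theorem NSpace_admits_effective_T3_action (l m n : ℕ)
    (hlm : Nat.gcd l m = 1) (hln : Nat.gcd l n = 1) :
    ∃ ρ : (Circle × Circle × Circle) → NSpace l m n → NSpace l m n,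
      Continuous (fun q : (Circle × Circle × Circle) × NSpace l m n => ρ q.1 q.2) ∧
      (∀ X, ρ 1 X = X) ∧
      (∀ s t X, ρ (s * t) X = ρ s (ρ t X)) ∧
      (∀ t, (∀ X, ρ t X = X) → t = 1) :=
  NSpace_admits_effective_T3_action_general l m n hlm
end
end
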